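/- arXiv:2502.00213 — 2 statements merged into one kernel-verified Lean document; each statement's English description precedes it below -/
import Mathlib

section
/- Let L(θ) = (1/2)θᵀHθ with H symmetric positive semidefinite and block diagonal with blocks H_b, and consider the sign update θ' = θ − η·sign(∇L(θ)) with η = ‖∇L(θ)‖₁/(P·Λ), where Λ := ∑_b (P_b/P)‖H_b‖₂. Then L(θ') − L(θ) ≤ −‖∇L(θ)‖₁²/(2PΛ). -/
open Matrix
open scoped RealInnerProductSpace

lemma mulVec_blockDiag' {B : ℕ} {Pb : Fin B → ℕ}
    (Hb : ∀ b, Matrix (Fin (Pb b)) (Fin (Pb b)) ℝ)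
    (v : (Σ b, Fin (Pb b)) → ℝ) (b : Fin B) (i : Fin (Pb b)) :
    (Matrix.blockDiagonal' Hb).mulVec v ⟨b, i⟩
      = ∑ j, Hb b i j * v ⟨b, j⟩ := by
  rw [mulVec, dotProduct, ← Finset.univ_sigma_univ, Finset.sum_sigma]
  rw [Finset.sum_eq_single b]
  · simp
  · intro b' _ hb'
    apply Finset.sum_eq_zero
    intro j _
    rw [blockDiagonal'_apply_ne _ _ _ (Ne.symm hb'), zero_mul]
  · simp

lemma dot_blockDiag' {B : ℕ} {Pb : Fin B → ℕ}
    (Hb : ∀ b, Matrix (Fin (Pb b)) (Fin (Pb b)) ℝ)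
    (v : (Σ b, Fin (Pb b)) → ℝ) :
    v ⬝ᵥ (Matrix.blockDiagonal' Hb).mulVec v
      = ∑ b, (fun i => v ⟨b, i⟩) ⬝ᵥ (Hb b).mulVec (fun i => v ⟨b, i⟩) := by
  rw [dotProduct, ← Finset.univ_sigma_univ, Finset.sum_sigma]
  refine Finset.sum_congr rfl fun b _ => ?_
  refine Finset.sum_congr rfl fun i _ => ?_
  rw [mulVec_blockDiag']
  rfl

lemma quad_le_norm {n : ℕ} (A : Matrix (Fin n) (Fin n) ℝ) (x : Fin n → ℝ) :
    x ⬝ᵥ A.mulVec x ≤ ‖Matrix.toEuclideanCLM (𝕜 := ℝ) A‖ * ∑ i, (x i) ^ 2 := by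
  set X : EuclideanSpace ℝ (Fin n) := (WithLp.equiv 2 _).symm x with hX
  have h1 : x ⬝ᵥ A.mulVec x = ⟪X, Matrix.toEuclideanCLM (𝕜 := ℝ) A X⟫ := by
    rw [hX, WithLp.equiv_symm_apply, toEuclideanCLM_toLp]
    simp [dotProduct, PiLp.inner_apply, RCLike.inner_apply, mulVec, toLin'_apply, mul_comm]
  have h2 : ‖X‖ ^ 2 = ∑ i, (x i) ^ 2 := by
    rw [EuclideanSpace.norm_eq, Real.sq_sqrt (by positivity)]
    simp [hX, sq_abs]
  rw [h1, ← h2]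
  calc ⟪X, Matrix.toEuclideanCLM (𝕜 := ℝ) A X⟫
      ≤ ‖X‖ * ‖Matrix.toEuclideanCLM (𝕜 := ℝ) A X‖ := real_inner_le_norm _ _
    _ ≤ ‖X‖ * (‖Matrix.toEuclideanCLM (𝕜 := ℝ) A‖ * ‖X‖) := by
        gcongr
        exact ContinuousLinearMap.le_opNorm _ _
    _ = ‖Matrix.toEuclideanCLM (𝕜 := ℝ) A‖ * ‖X‖ ^ 2 := by ring

lemma sign_mul_self' (x : ℝ) : Real.sign x * x = |x| := by
  rcases lt_trichotomy x 0 with h | h | h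
  · rw [Real.sign_of_neg h, abs_of_neg h]; ring
  · simp [h]
  · rw [Real.sign_of_pos h, abs_of_pos h]; ring

lemma sign_sq_le_one (x : ℝ) : Real.sign x ^ 2 ≤ 1 := by
  rcases lt_trichotomy x 0 with h | h | h
  · rw [Real.sign_of_neg h]; norm_num
  · simp [h]
  · rw [Real.sign_of_pos h]; norm_num

theorem stmt_16 (B : ℕ) (Pb : Fin B → ℕ)
    (Hb : ∀ b, Matrix (Fin (Pb b)) (Fin (Pb b)) ℝ)
    (hpsd : (Matrix.blockDiagonal' Hb).PosSemidef)
    (P : ℕ) (hP : P = ∑ b, Pb b)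
    (Λ : ℝ) (hΛ : Λ = ∑ b, ((Pb b : ℝ) / P) * ‖Matrix.toEuclideanCLM (𝕜 := ℝ) (Hb b)‖)
    (L : ((Σ b, Fin (Pb b)) → ℝ) → ℝ)
    (hL : ∀ θ, L θ = (1 / 2) * (θ ⬝ᵥ (Matrix.blockDiagonal' Hb).mulVec θ))
    (θ g : (Σ b, Fin (Pb b)) → ℝ)
    (hg : g = (Matrix.blockDiagonal' Hb).mulVec θ)
    (η : ℝ) (hη : η = (∑ i, |g i|) / (P * Λ))
    (θ' : (Σ b, Fin (Pb b)) → ℝ)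
    (hθ' : θ' = θ - η • fun i => Real.sign (g i)) :
    L θ' - L θ ≤ -(∑ i, |g i|) ^ 2 / (2 * P * Λ) := by
  set H := Matrix.blockDiagonal' Hb with hH
  set s : (Σ b, Fin (Pb b)) → ℝ := fun i => Real.sign (g i) with hs
  set G := ∑ i, |g i| with hG
  have hΛnn : 0 ≤ Λ := by
    rw [hΛ]; exact Finset.sum_nonneg fun b _ => mul_nonneg (by positivity) (norm_nonneg _)
  by_cases hPΛ : (P : ℝ) * Λ = 0
  · have hη0 : η = 0 := by rw [hη, hPΛ, div_zero]
    have h2 : (2 : ℝ) * P * Λ = 0 := by rw [mul_assoc, hPΛ, mul_zero]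
    rw [h2, div_zero, hθ', hη0]
    simp
  · have hPΛpos : 0 < (P : ℝ) * Λ :=
      lt_of_le_of_ne (mul_nonneg (Nat.cast_nonneg _) hΛnn) (Ne.symm hPΛ)
    have hPpos : 0 < (P : ℝ) := by
      rcases (Nat.cast_nonneg P : (0:ℝ) ≤ P).lt_or_eq with h | h
      · exact h
      · exfalso; apply hPΛ; rw [← h, zero_mul]
    -- symmetry
    have hsym : ∀ v w, v ⬝ᵥ H.mulVec w = w ⬝ᵥ H.mulVec v := by
      intro v w
      have ht : Hᵀ = H := by
        have h := hpsd.1.eq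
        simpa using h
      rw [dotProduct_mulVec, ← ht, vecMul_transpose, ht, dotProduct_comm]
    -- s ⬝ᵥ g = G
    have hsg : s ⬝ᵥ g = G := by
      rw [hG, dotProduct]
      exact Finset.sum_congr rfl fun i _ => sign_mul_self' (g i)
    set Q := s ⬝ᵥ H.mulVec s with hQ
    -- expansion
    have hexp : L θ' - L θ = -η * G + η ^ 2 / 2 * Q := by
      rw [hL, hL, hθ']
      have : θ - η • s = θ + (-η) • s := by rw [neg_smul, sub_eq_add_neg]
      rw [this, add_dotProduct, mulVec_add, dotProduct_add, dotProduct_add,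
        mulVec_smul, smul_dotProduct, dotProduct_smul, dotProduct_smul]
      have h1 : θ ⬝ᵥ H.mulVec s = G := by rw [hsym, ← hg, hsg]
      have h2 : s ⬝ᵥ H.mulVec θ = G := by rw [← hg, hsg]
      rw [h1, h2]
      simp only [smul_dotProduct, dotProduct_smul, smul_eq_mul, ← hQ]
      ring
    -- Q bounds
    have hQ0 : 0 ≤ Q := by
      have := hpsd.dotProduct_mulVec_nonneg s
      simpa using this
    have hQle : Q ≤ P * Λ := by
      have hPΛeq : (P : ℝ) * Λ = ∑ b, (Pb b : ℝ) * ‖Matrix.toEuclideanCLM (𝕜 := ℝ) (Hb b)‖ := by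
        have hPne : (P : ℝ) ≠ 0 := ne_of_gt hPpos
        have haux : ∀ x y : ℝ, (P : ℝ) * (x / P * y) = x * y := by
          intro x y; field_simp
        rw [hΛ, Finset.mul_sum]
        exact Finset.sum_congr rfl fun b _ => haux _ _
      rw [hQ, hH, dot_blockDiag', hPΛeq]
      refine Finset.sum_le_sum fun b _ => ?_
      calc (fun i => s ⟨b, i⟩) ⬝ᵥ (Hb b).mulVec (fun i => s ⟨b, i⟩)
          ≤ ‖Matrix.toEuclideanCLM (𝕜 := ℝ) (Hb b)‖ * ∑ i, (s ⟨b, i⟩) ^ 2 :=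
            quad_le_norm _ _
        _ ≤ ‖Matrix.toEuclideanCLM (𝕜 := ℝ) (Hb b)‖ * (Pb b : ℝ) := by
            have hnb : (0:ℝ) ≤ ‖Matrix.toEuclideanCLM (𝕜 := ℝ) (Hb b)‖ :=
              norm_nonneg (Matrix.toEuclideanCLM (𝕜 := ℝ) (Hb b))
            refine mul_le_mul_of_nonneg_left ?_ hnb
            calc ∑ i, (s ⟨b, i⟩) ^ 2 ≤ ∑ _i : Fin (Pb b), (1 : ℝ) :=
                  Finset.sum_le_sum fun i _ => sign_sq_le_one _
              _ = (Pb b : ℝ) := by simp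
        _ = (Pb b : ℝ) * ‖Matrix.toEuclideanCLM (𝕜 := ℝ) (Hb b)‖ := mul_comm _ _
    -- finish
    have hGnn : 0 ≤ G := Finset.sum_nonneg fun i _ => abs_nonneg _
    rw [hexp, hη]
    have key : -(G / (↑P * Λ)) * G + (G / (↑P * Λ)) ^ 2 / 2 * Q ≤
        -(G / (↑P * Λ)) * G + (G / (↑P * Λ)) ^ 2 / 2 * (↑P * Λ) := by
      gcongr
    refine key.trans (le_of_eq ?_)
    have h2 : (2:ℝ) * ↑P * Λ = 2 * (↑P * Λ) := by ring
    rw [h2]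
    set c := (P : ℝ) * Λ
    field_simp
    ring
end

section
/- Let g, ĝ ∈ ℝ^P with each coordinate satisfying, for a random ĝ, E[ĝ] = g and E[(ĝ_i − g_i)²] ≤ σ²·g_i². Then E[gᵀ(sign(g) − sign(ĝ))] ≤ 2σ²‖g‖₁. -/
open MeasureTheory

lemma measurable_real_sign : Measurable Real.sign := by
  unfold Real.sign
  exact Measurable.ite (measurableSet_lt measurable_id measurable_const) measurable_const
    (Measurable.ite (measurableSet_lt measurable_const measurable_id) measurable_const
      measurable_const)

lemma abs_real_sign_le (x : ℝ) : |Real.sign x| ≤ 1 := by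
  rcases Real.sign_apply_eq x with h | h | h <;> rw [h] <;> norm_num

lemma sign_key (a b : ℝ) (ha : a ≠ 0) :
    a * (Real.sign a - Real.sign b) ≤ 2 / |a| * (b - a) ^ 2 := by
  have habs : 0 < |a| := abs_pos.2 ha
  rw [div_mul_eq_mul_div, le_div_iff₀ habs]
  rcases ha.lt_or_gt with h | h
  · rw [Real.sign_of_neg h, abs_of_neg h]
    rcases lt_trichotomy b 0 with hb | rfl | hb
    · rw [Real.sign_of_neg hb]; nlinarith
    · rw [Real.sign_zero]; nlinarith
    · rw [Real.sign_of_pos hb]; nlinarith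
  · rw [Real.sign_of_pos h, abs_of_pos h]
    rcases lt_trichotomy b 0 with hb | rfl | hb
    · rw [Real.sign_of_neg hb]; nlinarith
    · rw [Real.sign_zero]; nlinarith
    · rw [Real.sign_of_pos hb]; nlinarith

theorem stmt_19 {Ω : Type*} [MeasurableSpace Ω] (μ : Measure Ω)
    [IsProbabilityMeasure μ]
    (P : ℕ) (g : Fin P → ℝ) (ghat : Ω → Fin P → ℝ) (σ : ℝ)
    (hmeas : ∀ i, Measurable fun ω => ghat ω i)
    (hint : ∀ i, Integrable (fun ω => (ghat ω i - g i) ^ 2) μ)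
    (hmean : ∀ i, ∫ ω, ghat ω i ∂μ = g i)
    (hvar : ∀ i, ∫ ω, (ghat ω i - g i) ^ 2 ∂μ ≤ σ ^ 2 * g i ^ 2) :
    ∫ ω, ∑ i, g i * (Real.sign (g i) - Real.sign (ghat ω i)) ∂μ ≤
      2 * σ ^ 2 * ∑ i, |g i| := by
  have hsq : 0 ≤ σ ^ 2 := sq_nonneg σ
  have hF : ∀ i : Fin P,
      Integrable (fun ω => g i * (Real.sign (g i) - Real.sign (ghat ω i))) μ := by
    intro i
    have h1 : Integrable (fun ω => g i * Real.sign (ghat ω i)) μ := by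
      refine Integrable.mono' (integrable_const |g i|)
        ((measurable_real_sign.comp (hmeas i)).const_mul (g i)).aestronglyMeasurable
        (Filter.Eventually.of_forall fun ω => ?_)
      rw [Real.norm_eq_abs, abs_mul]
      calc |g i| * |Real.sign (ghat ω i)| ≤ |g i| * 1 :=
            mul_le_mul_of_nonneg_left (abs_real_sign_le _) (abs_nonneg _)
        _ = |g i| := mul_one _
    have h2 : (fun ω => g i * (Real.sign (g i) - Real.sign (ghat ω i)))
        = fun ω => g i * Real.sign (g i) - g i * Real.sign (ghat ω i) := by
      funext ω; ring
    rw [h2]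
    exact (integrable_const _).sub h1
  rw [integral_finset_sum _ fun i _ => hF i]
  have key : ∀ i : Fin P,
      ∫ ω, g i * (Real.sign (g i) - Real.sign (ghat ω i)) ∂μ ≤ 2 * σ ^ 2 * |g i| := by
    intro i
    by_cases hg : g i = 0
    · simp [hg]
    · have habs : 0 < |g i| := abs_pos.2 hg
      have hmono : ∫ ω, g i * (Real.sign (g i) - Real.sign (ghat ω i)) ∂μ ≤
          ∫ ω, 2 / |g i| * (ghat ω i - g i) ^ 2 ∂μ :=
        integral_mono (hF i) ((hint i).const_mul _)
          (fun ω => sign_key (g i) (ghat ω i) hg)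
      refine hmono.trans ?_
      rw [integral_const_mul]
      have hle : 2 / |g i| * ∫ ω, (ghat ω i - g i) ^ 2 ∂μ ≤
          2 / |g i| * (σ ^ 2 * g i ^ 2) :=
        mul_le_mul_of_nonneg_left (hvar i) (by positivity)
      refine hle.trans_eq ?_
      field_simp
      nlinarith [sq_abs (g i), habs]
  calc (∑ i, ∫ ω, g i * (Real.sign (g i) - Real.sign (ghat ω i)) ∂μ)
      ≤ ∑ i, 2 * σ ^ 2 * |g i| := Finset.sum_le_sum fun i _ => key i
    _ = 2 * σ ^ 2 * ∑ i, |g i| := by rw [Finset.mul_sum]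
end
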